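/- Let E be a real normed vector space, 0 < δ < 1 < p, and let L : E → ℝ be a functional that is positively homogeneous of degree 1−δ (i.e. L(t v) = t^{1−δ} L(v) for all t ≥ 0) and satisfies L(v) > 0 for all v ≠ 0. Suppose u ∈ E, u ≠ 0, minimizes the functional I(v) = ‖v‖^p / p − L(v)/(1−δ) over E, and suppose ‖u‖^p = L(u). Then inf { ‖v‖^p : v ∈ E, L(v) = 1 } = ‖u‖^{p(1−δ−p)/(1−δ)}, and this infimum is attained at V = L(u)^{−1/(1−δ)} · u. -/

import Mathlib

/-!
Write `a = 1 - δ`. Every nonzero `w` with `‖w‖^p = L w` (a point of the Nehari set) has energy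
`I w = (1/p - 1/a) L w`, and `1/p - 1/a < 0`; so the minimizer `u` has the largest value of `L`
among such points. Any `v` with `L v = 1` rescales to such a point `t • v`, with
`‖v‖^p = t^(a-p) = (L (t • v))^((a-p)/a)`, and `L (t • v) ≤ L u` bounds `‖v‖^p` below by
`(L u)^((a-p)/a)` because the exponent is negative. Normalizing `u` itself attains the bound.
-/

open Real

section Homogeneous

variable {E : Type*} [NormedAddCommGroup E] [NormedSpace ℝ E] {a p : ℝ} {L : E → ℝ}

lemma map_zero_of_homogeneous (ha : a ≠ 0) (hhom : ∀ t : ℝ, 0 ≤ t → ∀ v : E, L (t • v) = t ^ a * L v) :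
    L 0 = 0 := by
  simpa [zero_rpow ha] using hhom 0 le_rfl 0

lemma le_of_sub_div_le_sub_div (ha : 0 < a) (hap : a < p) {x y : ℝ}
    (h : x / p - x / a ≤ y / p - y / a) : y ≤ x := by
  have hcoef : 1 / p - 1 / a < 0 := by
    rw [sub_neg]
    exact one_div_lt_one_div_of_lt ha hap
  have h' : x * (1 / p - 1 / a) ≤ y * (1 / p - 1 / a) := by
    convert h using 1 <;> ring
  exact (mul_le_mul_right_of_neg hcoef).mp h'

lemma map_rpow_le_norm_rpow_of_minimizer (ha : 0 < a) (hap : a < p)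
    (hhom : ∀ t : ℝ, 0 ≤ t → ∀ v : E, L (t • v) = t ^ a * L v) {u : E}
    (hmin : ∀ v : E, ‖u‖ ^ p / p - L u / a ≤ ‖v‖ ^ p / p - L v / a)
    (hEuler : ‖u‖ ^ p = L u) {v : E} (hv : L v = 1) :
    L u ^ ((a - p) / a) ≤ ‖v‖ ^ p := by
  have hv0 : v ≠ 0 := by
    rintro rfl
    simp [map_zero_of_homogeneous ha.ne' hhom] at hv
  have hN : 0 < ‖v‖ ^ p := rpow_pos_of_pos (norm_pos_iff.mpr hv0) p
  set t := (‖v‖ ^ p) ^ (a - p)⁻¹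
  have ht : 0 < t := rpow_pos_of_pos hN _
  have htN : t ^ (a - p) = ‖v‖ ^ p := by
    rw [← rpow_mul hN.le, inv_mul_cancel₀ (sub_ne_zero.mpr hap.ne), rpow_one]
  have hLt : L (t • v) = t ^ a := by rw [hhom t ht.le, hv, mul_one]
  have hNehari : ‖t • v‖ ^ p = L (t • v) := by
    rw [hLt, norm_smul, norm_of_nonneg ht.le, mul_rpow ht.le (norm_nonneg v), ← htN,
      ← rpow_add ht, add_sub_cancel]
  have hle : t ^ a ≤ L u := by
    rw [← hLt]
    refine le_of_sub_div_le_sub_div ha hap ?_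
    simpa only [hEuler, hNehari] using hmin (t • v)
  calc L u ^ ((a - p) / a)
      ≤ (t ^ a) ^ ((a - p) / a) :=
        rpow_le_rpow_of_nonpos (rpow_pos_of_pos ht a) hle
          (div_nonpos_of_nonpos_of_nonneg (by linarith) ha.le)
    _ = ‖v‖ ^ p := by rw [← rpow_mul ht.le, mul_div_cancel₀ _ ha.ne', htN]

lemma map_rpow_smul_self (ha : a ≠ 0)
    (hhom : ∀ t : ℝ, 0 ≤ t → ∀ v : E, L (t • v) = t ^ a * L v) {u : E} (hu : 0 < L u) :
    L (L u ^ (-1 / a) • u) = 1 := by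
  rw [hhom _ (rpow_nonneg hu.le _), ← rpow_mul hu.le, div_mul_cancel₀ _ ha, rpow_neg_one,
    inv_mul_cancel₀ hu.ne']

lemma norm_rpow_smul_self_rpow (ha : a ≠ 0) {u : E} (hu : 0 < L u) (hEuler : ‖u‖ ^ p = L u) :
    ‖L u ^ (-1 / a) • u‖ ^ p = L u ^ ((a - p) / a) := by
  rw [norm_smul, norm_of_nonneg (rpow_nonneg hu.le _), mul_rpow (rpow_nonneg hu.le _) (norm_nonneg u),
    hEuler, ← rpow_mul hu.le, ← rpow_add_one hu.ne']
  congr 1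
  field_simp
  ring

end Homogeneous

theorem stmt3_general {E : Type*} [NormedAddCommGroup E] [NormedSpace ℝ E]
    (δ p : ℝ) (hδ0 : 0 < δ) (hδ1 : δ < 1) (hp : 1 < p)
    (L : E → ℝ) (hhom : ∀ t : ℝ, 0 ≤ t → ∀ v : E, L (t • v) = t ^ (1 - δ) * L v)
    (u : E) (hu : u ≠ 0)
    (hmin : ∀ v : E, ‖u‖ ^ p / p - L u / (1 - δ) ≤ ‖v‖ ^ p / p - L v / (1 - δ))
    (hEuler : ‖u‖ ^ p = L u) :
    IsLeast {x : ℝ | ∃ v : E, L v = 1 ∧ ‖v‖ ^ p = x}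
        (‖u‖ ^ (p * (1 - δ - p) / (1 - δ))) ∧
      L ((L u ^ (-(1 : ℝ) / (1 - δ))) • u) = 1 ∧
      ‖(L u ^ (-(1 : ℝ) / (1 - δ))) • u‖ ^ p = ‖u‖ ^ (p * (1 - δ - p) / (1 - δ)) := by
  have ha : 0 < 1 - δ := by linarith
  have hap : 1 - δ < p := by linarith
  have hLu : 0 < L u := hEuler ▸ rpow_pos_of_pos (norm_pos_iff.mpr hu) p
  have hbound : ‖u‖ ^ (p * (1 - δ - p) / (1 - δ)) = L u ^ ((1 - δ - p) / (1 - δ)) := by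
    rw [mul_div_assoc, rpow_mul (norm_nonneg u), hEuler]
  have hLV := map_rpow_smul_self ha.ne' hhom hLu
  have hnormV := norm_rpow_smul_self_rpow ha.ne' hLu hEuler
  rw [hbound]
  refine ⟨⟨⟨_, hLV, hnormV⟩, ?_⟩, hLV, hnormV⟩
  rintro _ ⟨v, hv, rfl⟩
  exact map_rpow_le_norm_rpow_of_minimizer ha hap hhom hmin hEuler hv

/-- Abstract Theorem 1.5(a): if `u ≠ 0` minimizes `I(v) = ‖v‖^p/p - L(v)/(1-δ)` and
`‖u‖^p = L u`, then `inf {‖v‖^p : L v = 1} = ‖u‖^(p(1-δ-p)/(1-δ))`, attained at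
`V = (L u)^(-1/(1-δ)) • u`. -/
theorem stmt3 {E : Type*} [NormedAddCommGroup E] [NormedSpace ℝ E]
    (δ p : ℝ) (hδ0 : 0 < δ) (hδ1 : δ < 1) (hp : 1 < p)
    (L : E → ℝ) (hhom : ∀ t : ℝ, 0 ≤ t → ∀ v : E, L (t • v) = t ^ (1 - δ) * L v)
    (hLpos : ∀ v : E, v ≠ 0 → 0 < L v)
    (u : E) (hu : u ≠ 0)
    (hmin : ∀ v : E, ‖u‖ ^ p / p - L u / (1 - δ) ≤ ‖v‖ ^ p / p - L v / (1 - δ))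
    (hEuler : ‖u‖ ^ p = L u) :
    IsLeast {x : ℝ | ∃ v : E, L v = 1 ∧ ‖v‖ ^ p = x}
        (‖u‖ ^ (p * (1 - δ - p) / (1 - δ))) ∧
      L ((L u ^ (-(1 : ℝ) / (1 - δ))) • u) = 1 ∧
      ‖(L u ^ (-(1 : ℝ) / (1 - δ))) • u‖ ^ p = ‖u‖ ^ (p * (1 - δ - p) / (1 - δ)) :=
  stmt3_general δ p hδ0 hδ1 hp L hhom u hu hmin hEuler
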